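/- (Stochastic Gronwall, polynomial growth.) Let (X_t) be an adapted process on a filtered probability space satisfying X_{t+1} = X_t + α X_t^p + ξ_{t+1} + Z_{t+1}, X₀ = x₀ > 0, where p > 1 and α > 0 are fixed, (ξ_t) is adapted, and (Z_t) is a martingale difference sequence. Let (x̂_t) be the deterministic sequence defined by x̂_{t+1} = x̂_t + α x̂_t^p, x̂₀ = x₀/2. Fix T ∈ ℕ and δ ∈ (0,1). Suppose there exist Ξ, σ > 0 and δ_ξ ∈ (0,1) such that for every t, on the event { X_s ≥ x̂_s for all s ≤ t }: P( |ξ_{t+1}| > Ξ | F_t ) ≤ δ_ξ and E[Z_{t+1}² | F_t] ≤ σ². If Ξ ≤ x₀/(4T) and σ² ≤ x₀² δ/(16T), then with probability at least 1 − T δ_ξ − δ, X_t ≥ x̂_t for all t ≤ T. -/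

import Mathlib

/-!
As long as `X_s ≥ x̂_s` for all `s < t`, monotonicity of `x ↦ x + α x ^ p` on `[0, ∞)` gives
`X_t - x̂_t ≥ x₀ / 2 + ∑_{s<t} ξ_{s+1} + ∑_{s<t} Z_{s+1}`. By a union bound over the conditional
tail hypothesis, outside an event of probability at most `T δ_ξ` every `|ξ|` seen before the
comparison fails is at most `Ξ`, so the first sum is at least `-T Ξ ≥ -x₀ / 4`. The second sum,
with each increment switched off once the comparison has failed, is an L² martingale whose
increments have second moment at most `σ²`; Doob's maximal inequality for its square keeps it
above `-x₀ / 4` up to time `T` outside an event of probability at most `T σ² / (x₀ / 4)² ≤ δ`.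
On the remaining event the gap stays positive, by strong induction on `t`.
-/

open MeasureTheory Finset

section Comparison

variable {a p : ℝ} {x y : ℕ → ℝ}

lemma nonneg_of_rpow_recursion (ha : 0 ≤ a) (hy : ∀ t, y (t + 1) = y t + a * y t ^ p)
    (hy0 : 0 ≤ y 0) (t : ℕ) : 0 ≤ y t := by
  induction t with
  | zero => exact hy0
  | succ t ih => rw [hy]; have := Real.rpow_nonneg ih p; positivity

lemma initial_gap_add_sum_le_gap {e : ℕ → ℝ} (ha : 0 ≤ a) (hp : 0 ≤ p) (hy0 : 0 ≤ y 0)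
    (hx : ∀ t, x (t + 1) = x t + a * x t ^ p + e (t + 1))
    (hy : ∀ t, y (t + 1) = y t + a * y t ^ p) :
    ∀ t, (∀ s < t, y s ≤ x s) → x 0 - y 0 + ∑ s ∈ range t, e (s + 1) ≤ x t - y t := by
  intro t
  induction t with
  | zero => simp
  | succ t ih =>
    intro hle
    have hyx : y t ≤ x t := hle t t.lt_succ_self
    have hpow : y t ^ p ≤ x t ^ p :=
      Real.rpow_le_rpow (nonneg_of_rpow_recursion ha hy hy0 t) hyx hp
    have := ih fun s hs => hle s (hs.trans t.lt_succ_self)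
    rw [sum_range_succ, hx, hy]
    nlinarith

variable {T : ℕ} {Ξ : ℝ} {u v : ℕ → ℝ}

lemma le_of_abs_forcing_le (ha : 0 ≤ a) (hp : 0 ≤ p) (hy0 : 0 ≤ y 0) (hΞ : 0 ≤ Ξ)
    (hx : ∀ t, x (t + 1) = x t + a * x t ^ p + u (t + 1) + v (t + 1))
    (hy : ∀ t, y (t + 1) = y t + a * y t ^ p)
    (hu : ∀ t < T, (∀ s ≤ t, y s ≤ x s) → |u (t + 1)| ≤ Ξ)
    (hv : ∀ t ≤ T, (∀ s < t, y s ≤ x s) → |∑ s ∈ range t, v (s + 1)| < x 0 - y 0 - T * Ξ) :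
    ∀ t ≤ T, y t ≤ x t := by
  intro t
  induction t using Nat.strong_induction_on with
  | _ t ih =>
    intro htT
    have hgood : ∀ s < t, y s ≤ x s := fun s hs => ih s hs (hs.le.trans htT)
    have hgap := initial_gap_add_sum_le_gap (e := fun t => u t + v t) ha hp hy0
      (fun t => by rw [hx, add_assoc]) hy t hgood
    have hu_sum : -(t * Ξ) ≤ ∑ s ∈ range t, u (s + 1) := by
      have : ∑ s ∈ range t, (-Ξ) ≤ ∑ s ∈ range t, u (s + 1) :=
        sum_le_sum fun s hs => by
          have hs := mem_range.mp hs
          exact neg_le_of_abs_le <| hu s (hs.trans_le htT) fun r hr => hgood r (hr.trans_lt hs)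
      simpa using this
    have htΞ : (t : ℝ) * Ξ ≤ T * Ξ := by gcongr
    have hv_sum := neg_lt_of_abs_lt (hv t htT hgood)
    rw [sum_add_distrib] at hgap
    linarith

end Comparison

section CondExpBound

variable {Ω : Type*} {m m0 : MeasurableSpace Ω} {μ : Measure Ω} [IsFiniteMeasure μ]

lemma setIntegral_le_of_condExp_le (hm : m ≤ m0) {s : Set Ω} {f : Ω → ℝ} {c : ℝ}
    (hs : MeasurableSet[m] s) (hf : Integrable f μ) (hle : ∀ᵐ ω ∂μ, ω ∈ s → μ[f|m] ω ≤ c) :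
    ∫ ω in s, f ω ∂μ ≤ c * μ.real s := by
  rw [← setIntegral_condExp hm hf hs, mul_comm, ← smul_eq_mul, ← setIntegral_const]
  exact setIntegral_mono_on_ae integrable_condExp.integrableOn (integrableOn_const) (hm s hs) hle

end CondExpBound

namespace MeasureTheory.Martingale

variable {Ω : Type*} {m0 : MeasurableSpace Ω} {μ : Measure Ω}
  {F : Filtration ℕ m0} {M : ℕ → Ω → ℝ}

lemma condExp_mul_sub_succ_eq_zero (hM : Martingale M F μ) (hL2 : ∀ t, MemLp (M t) 2 μ)
    (t : ℕ) : μ[M t * (M (t + 1) - M t)|F t] =ᵐ[μ] 0 := by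
  have hinc : μ[M (t + 1) - M t|F t] =ᵐ[μ] 0 := by
    filter_upwards [condExp_sub (hM.integrable (t + 1)) (hM.integrable t) (F t),
      hM.condExp_ae_eq t.le_succ, hM.condExp_ae_eq (le_refl t)] with ω h1 h2 h3
    simp [h1, h2, h3]
  filter_upwards [condExp_mul_of_stronglyMeasurable_left (hM.stronglyMeasurable t)
    ((hL2 t).integrable_mul ((hL2 (t + 1)).sub (hL2 t)))
    ((hM.integrable (t + 1)).sub (hM.integrable t)), hinc] with ω h1 h2
  simp [h1, h2]

variable [IsFiniteMeasure μ]

lemma integral_mul_sub_succ_eq_zero (hM : Martingale M F μ) (hL2 : ∀ t, MemLp (M t) 2 μ)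
    (t : ℕ) : ∫ ω, M t ω * (M (t + 1) ω - M t ω) ∂μ = 0 := by
  rw [← integral_condExp (F.le t)]
  exact (integral_congr_ae (hM.condExp_mul_sub_succ_eq_zero hL2 t)).trans (by simp)

lemma integral_sq_succ (hM : Martingale M F μ) (hL2 : ∀ t, MemLp (M t) 2 μ) (t : ℕ) :
    ∫ ω, M (t + 1) ω ^ 2 ∂μ = ∫ ω, M t ω ^ 2 ∂μ + ∫ ω, (M (t + 1) ω - M t ω) ^ 2 ∂μ := by
  have hD : MemLp (M (t + 1) - M t) 2 μ := (hL2 (t + 1)).sub (hL2 t)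
  have hsq : Integrable (fun ω => M t ω ^ 2) μ := (hL2 t).integrable_sq
  have hDsq : Integrable (fun ω => (M (t + 1) ω - M t ω) ^ 2) μ := hD.integrable_sq
  have hcross : Integrable (fun ω => 2 * (M t ω * (M (t + 1) ω - M t ω))) μ :=
    ((hL2 t).integrable_mul hD).const_mul 2
  calc ∫ ω, M (t + 1) ω ^ 2 ∂μ
      = ∫ ω, M t ω ^ 2 + (2 * (M t ω * (M (t + 1) ω - M t ω)) + (M (t + 1) ω - M t ω) ^ 2) ∂μ :=
        integral_congr_ae (ae_of_all _ fun ω => by ring)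
    _ = ∫ ω, M t ω ^ 2 ∂μ + (∫ ω, 2 * (M t ω * (M (t + 1) ω - M t ω)) ∂μ
          + ∫ ω, (M (t + 1) ω - M t ω) ^ 2 ∂μ) := by
        rw [← integral_add hcross hDsq]; exact integral_add hsq (hcross.add hDsq)
    _ = _ := by rw [integral_const_mul, hM.integral_mul_sub_succ_eq_zero hL2, mul_zero, zero_add]

lemma submartingale_sq (hM : Martingale M F μ) (hL2 : ∀ t, MemLp (M t) 2 μ) :
    Submartingale (fun t => M t ^ 2) F μ := by
  refine submartingale_nat (fun t => (hM.stronglyMeasurable t).pow 2)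
    (fun t => (hL2 t).integrable_sq) fun t => ?_
  have hD : MemLp (M (t + 1) - M t) 2 μ := (hL2 (t + 1)).sub (hL2 t)
  have hsq : Integrable (M t ^ 2) μ := (hL2 t).integrable_sq
  have hsq' : Integrable (M (t + 1) ^ 2) μ := (hL2 (t + 1)).integrable_sq
  have hcross : Integrable ((2 : ℝ) • (M t * (M (t + 1) - M t))) μ :=
    ((hL2 t).integrable_mul hD).smul 2
  have hle : M t ^ 2 + (2 : ℝ) • (M t * (M (t + 1) - M t)) ≤ᵐ[μ] M (t + 1) ^ 2 :=
    ae_of_all _ fun ω => by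
      simp only [Pi.add_apply, Pi.pow_apply, Pi.smul_apply, Pi.mul_apply, Pi.sub_apply, smul_eq_mul]
      nlinarith [sq_nonneg (M (t + 1) ω - M t ω)]
  filter_upwards [condExp_mono (m := F t) (hsq.add hcross) hsq' hle,
    condExp_add hsq hcross (F t), condExp_smul (2 : ℝ) (M t * (M (t + 1) - M t)) (F t),
    hM.condExp_mul_sub_succ_eq_zero hL2 t] with ω hmono hadd hsmul hzero
  rw [condExp_of_stronglyMeasurable (F.le t) ((hM.stronglyMeasurable t).pow 2) hsq] at hadd
  rw [hadd, Pi.add_apply, hsmul, Pi.smul_apply, hzero] at hmono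
  simpa using hmono

lemma measureReal_exists_le_abs_le (hM : Martingale M F μ) (hL2 : ∀ t, MemLp (M t) 2 μ)
    {ε : ℝ} (hε : 0 < ε) (n : ℕ) :
    μ.real {ω | ∃ k ≤ n, ε ≤ |M k ω|} ≤ (∫ ω, M n ω ^ 2 ∂μ) / ε ^ 2 := by
  have hset : {ω | ∃ k ≤ n, ε ≤ |M k ω|} = {ω | ((ε ^ 2).toNNReal : ℝ) ≤
      (range (n + 1)).sup' nonempty_range_add_one fun k => (M k ^ 2) ω} := by
    ext ω
    simp [Real.coe_toNNReal _ (sq_nonneg ε), le_sup'_iff, sq_le_sq, abs_of_pos hε]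
  have hdoob := maximal_ineq (hM.submartingale_sq hL2) (fun t ω => sq_nonneg (M t ω))
    (ε := (ε ^ 2).toNNReal) n
  rw [← hset] at hdoob
  have hset_int : ∫ ω in {ω | ∃ k ≤ n, ε ≤ |M k ω|}, (M n ^ 2) ω ∂μ ≤ ∫ ω, M n ω ^ 2 ∂μ :=
    setIntegral_le_integral (hL2 n).integrable_sq (ae_of_all _ fun ω => sq_nonneg (M n ω))
  rw [le_div_iff₀ (by positivity), mul_comm]
  have := ENNReal.toReal_mono ENNReal.ofReal_ne_top
    (hdoob.trans (ENNReal.ofReal_le_ofReal hset_int))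
  rw [ENNReal.toReal_mul, ENNReal.toReal_ofReal (integral_nonneg fun ω => sq_nonneg _)] at this
  simp only [ENNReal.coe_toReal, Real.coe_toNNReal _ (sq_nonneg ε)] at this
  exact this

end MeasureTheory.Martingale

section IndicatorSum

variable {Ω : Type*} {m0 : MeasurableSpace Ω} {μ : Measure Ω}
  {F : Filtration ℕ m0} {G : ℕ → Set Ω} {Z : ℕ → Ω → ℝ}

/-- With `G s` the event that the comparison held up to time `s`, this is `∑ Z (s + 1)` stopped
at the first failure of the comparison: the conditional hypotheses on `Z` hold only on `G s`. -/
noncomputable def indicatorSum (G : ℕ → Set Ω) (Z : ℕ → Ω → ℝ) (t : ℕ) : Ω → ℝ :=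
  ∑ s ∈ range t, (G s).indicator (Z (s + 1))

lemma indicatorSum_succ (t : ℕ) :
    indicatorSum G Z (t + 1) = indicatorSum G Z t + (G t).indicator (Z (t + 1)) :=
  sum_range_succ _ t

lemma indicatorSum_apply_of_forall_mem {t : ℕ} {ω : Ω} (hω : ∀ s < t, ω ∈ G s) :
    indicatorSum G Z t ω = ∑ s ∈ range t, Z (s + 1) ω := by
  simp only [indicatorSum, Finset.sum_apply]
  exact sum_congr rfl fun s hs => Set.indicator_of_mem (hω s (mem_range.mp hs)) _

lemma memLp_indicatorSum (hG : ∀ t, MeasurableSet (G t)) (hZ : ∀ t, MemLp (Z (t + 1)) 2 μ)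
    (t : ℕ) : MemLp (indicatorSum G Z t) 2 μ :=
  memLp_finsetSum' _ fun s _ => (hZ s).indicator (hG s)

lemma martingale_indicatorSum [IsFiniteMeasure μ] (hG : ∀ t, MeasurableSet[F t] (G t))
    (hZ : Adapted F Z) (hint : ∀ t, Integrable (Z (t + 1)) μ)
    (hmds : ∀ t, μ[Z (t + 1)|F t] =ᵐ[μ] 0) : Martingale (indicatorSum G Z) F μ := by
  refine martingale_of_condExp_sub_eq_zero_nat (fun t => ?_)
    (fun t => integrable_finsetSum' _ fun s _ => (hint s).indicator (F.le s _ (hG s))) fun t => ?_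
  · refine Finset.stronglyMeasurable_sum _ fun s hs => ?_
    exact (((hZ (s + 1)).stronglyMeasurable.indicator (F.mono s.le_succ _ (hG s)))).mono
      (F.mono (mem_range.mp hs))
  · rw [indicatorSum_succ, add_sub_cancel_left]
    filter_upwards [condExp_indicator (hint t) (hG t), hmds t] with ω h1 h2
    simp [h1, h2]

lemma integral_indicatorSum_sq [IsFiniteMeasure μ] (hG : ∀ t, MeasurableSet[F t] (G t))
    (hZ : Adapted F Z) (hZL2 : ∀ t, MemLp (Z (t + 1)) 2 μ)
    (hmds : ∀ t, μ[Z (t + 1)|F t] =ᵐ[μ] 0) (t : ℕ) :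
    ∫ ω, indicatorSum G Z t ω ^ 2 ∂μ = ∑ s ∈ range t, ∫ ω in G s, Z (s + 1) ω ^ 2 ∂μ := by
  have hM := martingale_indicatorSum hG hZ (fun t => (hZL2 t).integrable one_le_two) hmds
  have hL2 := memLp_indicatorSum (fun t => F.le t _ (hG t)) hZL2
  induction t with
  | zero => simp [indicatorSum]
  | succ t ih =>
    rw [hM.integral_sq_succ hL2, ih, sum_range_succ, indicatorSum_succ]
    simp only [Pi.add_apply, add_sub_cancel_left]
    rw [← integral_indicator (F.le t _ (hG t))]
    congr 2 with ω
    by_cases hω : ω ∈ G t <;> simp [hω]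

lemma integral_indicatorSum_sq_le [IsProbabilityMeasure μ] (hG : ∀ t, MeasurableSet[F t] (G t))
    (hZ : Adapted F Z) (hZL2 : ∀ t, MemLp (Z (t + 1)) 2 μ)
    (hmds : ∀ t, μ[Z (t + 1)|F t] =ᵐ[μ] 0) {c : ℝ} (hc : 0 ≤ c)
    (hvar : ∀ t, ∀ᵐ ω ∂μ, ω ∈ G t → μ[fun ω => Z (t + 1) ω ^ 2|F t] ω ≤ c) (t : ℕ) :
    ∫ ω, indicatorSum G Z t ω ^ 2 ∂μ ≤ t * c := by
  rw [integral_indicatorSum_sq hG hZ hZL2 hmds]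
  calc ∑ s ∈ range t, ∫ ω in G s, Z (s + 1) ω ^ 2 ∂μ ≤ ∑ _s ∈ range t, c :=
        sum_le_sum fun s _ => (setIntegral_le_of_condExp_le (F.le s) (hG s)
          (hZL2 s).integrable_sq (hvar s)).trans (mul_le_of_le_one_right hc measureReal_le_one)
    _ = t * c := by simp

end IndicatorSum

section Probability

variable {Ω : Type*} {m0 : MeasurableSpace Ω} {μ : Measure Ω}

lemma MeasureTheory.Adapted.measurableSet_forall_le_le {F : Filtration ℕ m0} {X : ℕ → Ω → ℝ}
    (hX : Adapted F X) (y : ℕ → ℝ) (t : ℕ) : MeasurableSet[F t] {ω | ∀ s ≤ t, y s ≤ X s ω} := by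
  simp only [Set.ofPred_forall]
  exact .iInter fun s => .iInter fun hs =>
    measurableSet_le measurable_const ((hX s).mono (F.mono hs) le_rfl)

lemma measureReal_inter_le_of_condExp_indicator_le [IsFiniteMeasure μ] {m : MeasurableSpace Ω}
    (hm : m ≤ m0) {s S : Set Ω} {c : ℝ} (hs : MeasurableSet[m] s) (hS : MeasurableSet[m0] S)
    (hle : ∀ᵐ ω ∂μ, ω ∈ s → μ[S.indicator (fun _ => (1 : ℝ))|m] ω ≤ c) :
    μ.real (s ∩ S) ≤ c * μ.real s := by
  calc μ.real (s ∩ S) = ∫ ω in s, S.indicator (fun _ => (1 : ℝ)) ω ∂μ := by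
        rw [Set.inter_comm, ← measureReal_restrict_apply hS]
        exact (integral_indicator_one hS).symm
    _ ≤ c * μ.real s := setIntegral_le_of_condExp_le hm hs ((integrable_const 1).indicator hS) hle

lemma measureReal_biUnion_inter_le [IsProbabilityMeasure μ] {F : Filtration ℕ m0}
    {G S : ℕ → Set Ω} {c : ℝ} (hc : 0 ≤ c) (hG : ∀ t, MeasurableSet[F t] (G t))
    (hS : ∀ t, MeasurableSet (S t))
    (hle : ∀ t, ∀ᵐ ω ∂μ, ω ∈ G t → μ[(S t).indicator (fun _ => (1 : ℝ))|F t] ω ≤ c) (T : ℕ) :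
    μ.real (⋃ t ∈ range T, G t ∩ S t) ≤ T * c :=
  calc μ.real (⋃ t ∈ range T, G t ∩ S t) ≤ ∑ t ∈ range T, μ.real (G t ∩ S t) :=
        measureReal_biUnion_finset_le _ _
    _ ≤ ∑ _t ∈ range T, c := sum_le_sum fun t _ =>
        (measureReal_inter_le_of_condExp_indicator_le (F.le t) (hG t) (hS t) (hle t)).trans
          (mul_le_of_le_one_right hc measureReal_le_one)
    _ = T * c := by simp

lemma ofReal_one_sub_sub_le_measure [IsProbabilityMeasure μ] {A B E : Set Ω} {a b : ℝ}
    (hA : μ.real A ≤ a) (hB : μ.real B ≤ b) (hE : ∀ ω, ω ∉ A → ω ∉ B → ω ∈ E) :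
    ENNReal.ofReal (1 - a - b) ≤ μ E := by
  refine ENNReal.ofReal_le_of_le_toReal ?_
  have hcover : Set.univ ⊆ E ∪ A ∪ B := fun ω _ => by
    by_cases hωA : ω ∈ A
    · exact .inl (.inr hωA)
    by_cases hωB : ω ∈ B
    · exact .inr hωB
    exact .inl (.inl (hE ω hωA hωB))
  have : 1 ≤ μ.real E + μ.real A + μ.real B := calc
    1 = μ.real Set.univ := probReal_univ.symm
    _ ≤ μ.real (E ∪ A ∪ B) := measureReal_mono hcover
    _ ≤ μ.real E + μ.real A + μ.real B :=
      (measureReal_union_le _ _).trans (add_le_add (measureReal_union_le _ _) le_rfl)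
  change 1 - a - b ≤ μ.real E
  linarith

end Probability

lemma natCast_mul_le_div_of_le_div {n : ℕ} {a b k : ℝ} (hb : 0 ≤ b) (hk : 0 < k)
    (h : a ≤ b / (k * n)) : n * a ≤ b / k := by
  rcases n.eq_zero_or_pos with rfl | hn
  · simpa using div_nonneg hb hk.le
  · calc (n : ℝ) * a ≤ n * (b / (k * n)) := by gcongr
      _ = b / k := by field_simp

theorem stochastic_gronwall_polynomial_general {Ω : Type*} {m0 : MeasurableSpace Ω}
    (μ : Measure Ω) [IsProbabilityMeasure μ] (F : Filtration ℕ m0)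
    (p α x₀ : ℝ) (hp : 1 < p) (hα : 0 < α) (hx₀ : 0 < x₀)
    (X ξ Z : ℕ → Ω → ℝ)
    (hXadapted : Adapted F X) (hξadapted : Adapted F ξ) (hZadapted : Adapted F Z)
    (hZL2 : ∀ t, MemLp (Z t) 2 μ)
    (hmds : ∀ t, μ[Z (t + 1)|F t] =ᵐ[μ] 0)
    (hX0 : ∀ ω, X 0 ω = x₀)
    (hrec : ∀ t ω, X (t + 1) ω = X t ω + α * X t ω ^ p + ξ (t + 1) ω + Z (t + 1) ω)
    (xhat : ℕ → ℝ) (hxhat0 : xhat 0 = x₀ / 2)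
    (hxhatrec : ∀ t, xhat (t + 1) = xhat t + α * xhat t ^ p)
    (T : ℕ) (δ : ℝ) (hδ : δ ∈ Set.Ioo (0 : ℝ) 1)
    (δξ : ℝ) (hδξ : δξ ∈ Set.Ioo (0 : ℝ) 1)
    (Ξ σ : ℝ) (hΞ : 0 < Ξ)
    (hξbound : ∀ t, ∀ᵐ ω ∂μ,
      (∀ s ≤ t, xhat s ≤ X s ω) →
      (μ[Set.indicator {ω' | Ξ < |ξ (t + 1) ω'|} (fun _ => (1 : ℝ))|F t]) ω ≤ δξ)
    (hvar : ∀ t, ∀ᵐ ω ∂μ,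
      (∀ s ≤ t, xhat s ≤ X s ω) →
      (μ[fun ω' => (Z (t + 1) ω') ^ 2|F t]) ω ≤ σ ^ 2)
    (hΞle : Ξ ≤ x₀ / (4 * T)) (hσle : σ ^ 2 ≤ x₀ ^ 2 * δ / (16 * T)) :
    ENNReal.ofReal (1 - T * δξ - δ)
      ≤ μ {ω | ∀ t ≤ T, xhat t ≤ X t ω} := by
  set G : ℕ → Set Ω := fun t => {ω | ∀ s ≤ t, xhat s ≤ X s ω}
  have hG : ∀ t, MeasurableSet[F t] (G t) := hXadapted.measurableSet_forall_le_le xhat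
  have hZL2' : ∀ t, MemLp (Z (t + 1)) 2 μ := fun t => hZL2 (t + 1)
  have hM := martingale_indicatorSum hG hZadapted (fun t => (hZL2' t).integrable one_le_two) hmds
  have hML2 := memLp_indicatorSum (fun t => F.le t _ (hG t)) hZL2'
  have hbadZ : μ.real {ω | ∃ k ≤ T, x₀ / 4 ≤ |indicatorSum G Z k ω|} ≤ δ := by
    refine (hM.measureReal_exists_le_abs_le hML2 (by positivity) T).trans ?_
    rw [div_le_iff₀ (by positivity)]
    calc ∫ ω, indicatorSum G Z T ω ^ 2 ∂μ ≤ T * σ ^ 2 :=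
          integral_indicatorSum_sq_le hG hZadapted hZL2' hmds (sq_nonneg σ) hvar T
      _ ≤ x₀ ^ 2 * δ / 16 :=
          natCast_mul_le_div_of_le_div (mul_nonneg (sq_nonneg x₀) hδ.1.le) (by norm_num) hσle
      _ = δ * (x₀ / 4) ^ 2 := by ring
  have hbadξ : μ.real (⋃ t ∈ range T, G t ∩ {ω | Ξ < |ξ (t + 1) ω|}) ≤ T * δξ :=
    measureReal_biUnion_inter_le hδξ.1.le hG
      (fun t => measurableSet_lt measurable_const ((hξadapted (t + 1)).le (F.le _)).abs) hξbound T
  have hTΞ : T * Ξ ≤ x₀ / 4 := natCast_mul_le_div_of_le_div hx₀.le (by norm_num) hΞle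
  refine ofReal_one_sub_sub_le_measure hbadξ hbadZ fun ω hωξ hωZ => ?_
  refine le_of_abs_forcing_le (x := fun t => X t ω) (u := fun t => ξ t ω) (v := fun t => Z t ω)
    hα.le (by linarith) (by rw [hxhat0]; positivity) hΞ.le (fun t => hrec t ω) hxhatrec
    (fun t ht hgood => not_lt.mp fun h => hωξ (Set.mem_biUnion (mem_range.mpr ht) ⟨hgood, h⟩))
    fun t ht hgood => ?_
  rw [← indicatorSum_apply_of_forall_mem (G := G) fun s hs r hr => hgood r (hr.trans_lt hs)]
  have := not_le.mp fun h => hωZ ⟨t, ht, h⟩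
  simp only [hX0, hxhat0]
  linarith

/-- stochastic Gronwall lemma, polynomial growth.
Let `X_{t+1} = X_t + α X_t^p + ξ_{t+1} + Z_{t+1}` with `X₀ = x₀ > 0`, `p > 1`, `α > 0`,
`(ξ_t)` adapted and `(Z_t)` a martingale difference sequence, and let `x̂` solve
`x̂_{t+1} = x̂_t + α x̂_t^p`, `x̂₀ = x₀/2`. Assume that on the event
`{X_s ≥ x̂_s for all s ≤ t}` the conditional probability that `|ξ_{t+1}| > Ξ` is at most
`δ_ξ` and the conditional variance of `Z_{t+1}` is at most `σ²`. If `Ξ ≤ x₀/(4T)` and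
`σ² ≤ x₀² δ/(16T)`, then with probability at least `1 − T δ_ξ − δ`, `X_t ≥ x̂_t` for all
`t ≤ T`. -/
theorem stochastic_gronwall_polynomial {Ω : Type*} {m0 : MeasurableSpace Ω}
    (μ : Measure Ω) [IsProbabilityMeasure μ] (F : Filtration ℕ m0)
    (p α x₀ : ℝ) (hp : 1 < p) (hα : 0 < α) (hx₀ : 0 < x₀)
    (X ξ Z : ℕ → Ω → ℝ)
    (hXadapted : Adapted F X) (hξadapted : Adapted F ξ) (hZadapted : Adapted F Z)
    (hZL2 : ∀ t, MemLp (Z t) 2 μ)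
    (hmds : ∀ t, μ[Z (t + 1)|F t] =ᵐ[μ] 0)
    (hX0 : ∀ ω, X 0 ω = x₀)
    (hrec : ∀ t ω, X (t + 1) ω = X t ω + α * X t ω ^ p + ξ (t + 1) ω + Z (t + 1) ω)
    (xhat : ℕ → ℝ) (hxhat0 : xhat 0 = x₀ / 2)
    (hxhatrec : ∀ t, xhat (t + 1) = xhat t + α * xhat t ^ p)
    (T : ℕ) (δ : ℝ) (hδ : δ ∈ Set.Ioo (0 : ℝ) 1)
    (δξ : ℝ) (hδξ : δξ ∈ Set.Ioo (0 : ℝ) 1)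
    (Ξ σ : ℝ) (hΞ : 0 < Ξ) (hσ : 0 < σ)
    (hξbound : ∀ t, ∀ᵐ ω ∂μ,
      (∀ s ≤ t, xhat s ≤ X s ω) →
      (μ[Set.indicator {ω' | Ξ < |ξ (t + 1) ω'|} (fun _ => (1 : ℝ))|F t]) ω ≤ δξ)
    (hvar : ∀ t, ∀ᵐ ω ∂μ,
      (∀ s ≤ t, xhat s ≤ X s ω) →
      (μ[fun ω' => (Z (t + 1) ω') ^ 2|F t]) ω ≤ σ ^ 2)
    (hΞle : Ξ ≤ x₀ / (4 * T)) (hσle : σ ^ 2 ≤ x₀ ^ 2 * δ / (16 * T)) :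
    ENNReal.ofReal (1 - T * δξ - δ)
      ≤ μ {ω | ∀ t ≤ T, xhat t ≤ X t ω} :=
  stochastic_gronwall_polynomial_general μ F p α x₀ hp hα hx₀ X ξ Z hXadapted hξadapted hZadapted
    hZL2 hmds hX0 hrec xhat hxhat0 hxhatrec T δ hδ δξ hδξ Ξ σ hΞ hξbound hvar hΞle hσle
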